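/- Let f, g : S → ℝ with g(x) > 0 for all x ∈ S, where S is a nonempty set. Suppose x* ∈ S achieves the maximum of f(x) - q*·g(x) over S, where q* = f(x*)/g(x*), and the maximum value f(x*) - q*·g(x*) equals 0. Then x* maximizes the ratio f(x)/g(x) over S; conversely if x* maximizes f/g and q* = f(x*)/g(x*), then max_{x∈S} (f(x) - q*·g(x)) = 0. -/

import Mathlib

theorem stmt_3 {α : Type*} (S : Set α) (hS : S.Nonempty) (f g : α → ℝ)
    (hg : ∀ x ∈ S, 0 < g x) (xstar : α) (hx : xstar ∈ S) :
    ((∀ x ∈ S, f x - (f xstar / g xstar) * g x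
        ≤ f xstar - (f xstar / g xstar) * g xstar) ∧
      f xstar - (f xstar / g xstar) * g xstar = 0 →
      ∀ x ∈ S, f x / g x ≤ f xstar / g xstar) ∧
    ((∀ x ∈ S, f x / g x ≤ f xstar / g xstar) →
      (∀ x ∈ S, f x - (f xstar / g xstar) * g x ≤ 0) ∧
      f xstar - (f xstar / g xstar) * g xstar = 0) := by
  have hgs := hg xstar hx
  have hq : f xstar - (f xstar / g xstar) * g xstar = 0 := by
    field_simp
    ring
  constructor
  · rintro ⟨h1, _⟩ x hxS
    have := (h1 x hxS).trans_eq hq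
    have hgx := hg x hxS
    rw [div_le_iff₀ hgx]
    linarith
  · intro h
    refine ⟨fun x hxS => ?_, hq⟩
    have hgx := hg x hxS
    have := (div_le_div_iff₀ hgx hgs).mp (h x hxS)
    have : f x * g xstar ≤ f xstar * g x := this
    have h2 : f xstar / g xstar * g x = f xstar * g x / g xstar := by ring
    rw [h2, sub_nonpos, le_div_iff₀ hgs]
    linarith
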